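/- Stability of the full scheme: with u⁰ := P_h ũ⁰ where ũ⁰ is obtained by cell-averaging an initial datum v⁰ ∈ L²(Ω)³, and f^{m+1} obtained by space–time cell-averaging f ∈ L²([0,T];L²(Ω)³), the discrete solution satisfies ‖u^{n+1}‖_{Ω_h} ≤ ‖v⁰‖_{L²(Ω)³} + √T ‖f‖_{L²([0,T];L²(Ω)³)} for all 0 ≤ n < T_τ, uniformly in h and τ. -/

import Mathlib

open Finset MeasureTheory Set Filter

/-- Standard basis vector `e^i` of the integer grid `ℤ³` (grid points `x` represent `h•x ∈ hℤ³`). -/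
def gE (i : Fin 3) : Fin 3 → ℤ := fun j => if j = i then 1 else 0

/-- Forward difference quotient `D_i⁺φ(x) = (φ(x+he^i) − φ(x))/h`. -/
noncomputable def Dp (h : ℝ) (i : Fin 3) (φ : (Fin 3 → ℤ) → ℝ) (x : Fin 3 → ℤ) : ℝ :=
  (φ (x + gE i) - φ x) / h

/-- Centered second difference `D_i²φ(x) = (φ(x+he^i)+φ(x−he^i)−2φ(x))/h²`. -/
noncomputable def Dtwo (h : ℝ) (i : Fin 3) (φ : (Fin 3 → ℤ) → ℝ) (x : Fin 3 → ℤ) : ℝ :=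
  (φ (x + gE i) + φ (x - gE i) - 2 * φ x) / h ^ 2

/-- Discrete (forward) gradient `𝒟φ`. -/
noncomputable def dgrad (h : ℝ) (φ : (Fin 3 → ℤ) → ℝ) (x : Fin 3 → ℤ) : Fin 3 → ℝ :=
  fun i => Dp h i φ x

/-- Discrete (backward) divergence `𝒟·w`. -/
noncomputable def ddiv (h : ℝ) (w : (Fin 3 → ℤ) → Fin 3 → ℝ) (x : Fin 3 → ℤ) : ℝ :=
  ∑ i, (w x i - w (x - gE i) i) / h

/-- Grid boundary `∂Ω_h = {x ∈ Ω_h | {x ± he^i} ⊄ Ω_h}`. -/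
def gBdry (Ω : Finset (Fin 3 → ℤ)) : Finset (Fin 3 → ℤ) :=
  Ω.filter fun x => ¬ (∀ i, (x + gE i) ∈ Ω ∧ (x - gE i) ∈ Ω)

/-- The half-open cube `C_h(x)` of side `h` centered at the point `h•x` of `hℤ³`. -/
def Cube (h : ℝ) (x : Fin 3 → ℤ) : Set (Fin 3 → ℝ) :=
  {y | ∀ i, h * (x i : ℝ) - h / 2 ≤ y i ∧ y i < h * (x i : ℝ) + h / 2}

/-!
The scheme alternates a convection–diffusion step `u^n ↦ v^n` with a discrete Leray projection
`v^n ↦ u^{n+1}`. Testing the step against `v^n` and summing by parts, the skew-symmetric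
convection term vanishes because `u^n` is discretely divergence free, and the discrete Laplacian
is dissipative; Cauchy–Schwarz then gives `‖v^n‖ ≤ ‖u^n‖ + τ‖f^{n+1}‖`. The projection is a
contraction, since discrete gradients of potentials vanishing on `∂Ω_h` are orthogonal to
divergence-free fields. Telescoping gives `‖u^{n+1}‖ ≤ ‖ũ⁰‖ + ∑ₘ τ‖f^{m+1}‖`; Cauchy–Schwarz in
time with `(n+1)τ ≤ T`, and Jensen's inequality on every (space–time) cell, bound the two data
terms by the continuous norms.
-/

open Function
open scoped ENNReal

abbrev Grid := Fin 3 → ℤ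

section Shift

variable {G : Type*} [AddGroup G] {s : Finset G}

theorem Finset.sum_comp_add_right_eq {M : Type*} [AddCommMonoid M] {F : G → M} (c : G)
    (hF : ∀ x ∉ s, F x = 0) (hFc : ∀ x ∉ s, F (x + c) = 0) :
    ∑ x ∈ s, F (x + c) = ∑ x ∈ s, F x := by
  rw [← finsum_eq_sum_of_support_subset F (support_subset_iff'.2 hF),
    ← finsum_eq_sum_of_support_subset _ (support_subset_iff'.2 hFc)]
  exact finsum_comp_equiv (Equiv.addRight c)

theorem Finset.sum_comp_add_right_le {F : G → ℝ} (c : G) (hF0 : ∀ x, 0 ≤ F x)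
    (hF : ∀ x ∉ s, F x = 0) : ∑ x ∈ s, F (x + c) ≤ ∑ x ∈ s, F x := by
  classical
  calc ∑ x ∈ s, F (x + c) = ∑ y ∈ s.map (Equiv.addRight c).toEmbedding, F y :=
        by rw [Finset.sum_map]; rfl
    _ ≤ ∑ y ∈ s.map (Equiv.addRight c).toEmbedding ∪ s, F y :=
        Finset.sum_le_sum_of_subset_of_nonneg Finset.subset_union_left fun y _ _ => hF0 y
    _ = ∑ y ∈ s, F y :=
        (Finset.sum_subset Finset.subset_union_right fun y _ hy => hF y hy).symm

theorem Finset.sum_mul_sub_comp_add {a φ : G → ℝ} (c : G) (ha : ∀ x ∉ s, a x = 0)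
    (hφ : ∀ x ∉ s, φ x = 0) :
    ∑ x ∈ s, a x * (φ (x + c) - φ x) = ∑ x ∈ s, (a (x - c) - a x) * φ x := by
  have hshift : ∑ x ∈ s, a x * φ (x + c) = ∑ x ∈ s, a (x - c) * φ x := by
    simpa only [add_sub_cancel_right] using
      Finset.sum_comp_add_right_eq (F := fun x => a (x - c) * φ x) c
        (fun x hx => by simp [hφ x hx]) (fun x hx => by simp [ha x hx])
  simp only [mul_sub, sub_mul, Finset.sum_sub_distrib, hshift]

theorem Finset.sum_mul_skew_diff {a φ : G → ℝ} (c : G) (hφ : ∀ x ∉ s, φ x = 0) :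
    ∑ x ∈ s, φ x * (a (x - c) * (φ x - φ (x - c)) + a x * (φ (x + c) - φ x)) =
      ∑ x ∈ s, φ x ^ 2 * (a (x - c) - a x) := by
  have hparts := Finset.sum_mul_sub_comp_add (a := fun x => a x * φ x) c
    (fun x hx => by simp [hφ x hx]) hφ
  rw [← sub_eq_zero, ← Finset.sum_sub_distrib, ← sub_eq_zero.2 hparts, ← Finset.sum_sub_distrib]
  exact Finset.sum_congr rfl fun x _ => by ring

theorem Finset.sum_mul_second_diff_nonpos {φ : G → ℝ} (c : G) (hφ : ∀ x ∉ s, φ x = 0) :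
    ∑ x ∈ s, φ x * (φ (x + c) + φ (x - c) - 2 * φ x) ≤ 0 := by
  have hparts := Finset.sum_mul_sub_comp_add c hφ hφ
  have hshift := Finset.sum_comp_add_right_le (s := s) (F := fun x => φ x ^ 2) c (fun x => sq_nonneg _)
    (fun x hx => by simp [hφ x hx])
  -- `2ab - 2a² ≤ b² - a²` termwise
  have hamgm : ∑ x ∈ s, φ x * (φ (x + c) + φ (x - c) - 2 * φ x) ≤
      ∑ x ∈ s, (φ (x + c) ^ 2 - φ x ^ 2) := by
    calc ∑ x ∈ s, φ x * (φ (x + c) + φ (x - c) - 2 * φ x)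
        = ∑ x ∈ s, φ x * (φ (x + c) - φ x) + ∑ x ∈ s, (φ (x - c) - φ x) * φ x := by
          rw [← Finset.sum_add_distrib]
          exact Finset.sum_congr rfl fun x _ => by ring
      _ = ∑ x ∈ s, 2 * (φ x * (φ (x + c) - φ x)) := by rw [← hparts, ← Finset.mul_sum]; ring
      _ ≤ _ := Finset.sum_le_sum fun x _ => by nlinarith [sq_nonneg (φ (x + c) - φ x)]
  rw [Finset.sum_sub_distrib] at hamgm
  linarith

end Shift

theorem Finset.sum_mul_le_sqrt_mul_card_mul_sqrt {ι : Type*} (s : Finset ι) {τ : ℝ}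
    (hτ : 0 ≤ τ) (a : ι → ℝ) : ∑ k ∈ s, τ * a k ≤ √(τ * s.card) * √(∑ k ∈ s, τ * a k ^ 2) := by
  have hcs := Real.sum_mul_le_sqrt_mul_sqrt s (fun _ => √τ) (fun k => √τ * a k)
  simp only [mul_pow, Real.sq_sqrt hτ, ← mul_assoc, Real.mul_self_sqrt hτ, Finset.sum_const,
    nsmul_eq_mul] at hcs
  rwa [mul_comm τ]

noncomputable section GridFields

variable (h : ℝ) (s : Finset Grid)

def skewConv (u w : Grid → Fin 3 → ℝ) : Grid → Fin 3 → ℝ := fun x i =>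
  ∑ j, (u (x - gE j) j * Dp h j (fun y => w y i) (x - gE j)
    + u x j * Dp h j (fun y => w y i) x) / 2

def dlap (w : Grid → Fin 3 → ℝ) : Grid → Fin 3 → ℝ := fun x i =>
  ∑ j, Dtwo h j (fun y => w y i) x

-- `gridNorm h Ωh` is the norm `‖·‖_{Ω_h}`: every grid point carries the volume `h³` of its cell.
def gridInner (a b : Grid → Fin 3 → ℝ) : ℝ := ∑ x ∈ s, (∑ i, a x i * b x i) * h ^ 3

def gridNorm (a : Grid → Fin 3 → ℝ) : ℝ := √(∑ x ∈ s, (∑ i, a x i ^ 2) * h ^ 3)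

variable {h s}

theorem gridInner_self (hh : 0 ≤ h) (a : Grid → Fin 3 → ℝ) :
    gridInner h s a a = gridNorm h s a ^ 2 := by
  rw [gridNorm, Real.sq_sqrt (Finset.sum_nonneg fun x _ => by positivity)]
  simp only [gridInner, sq]

theorem gridInner_le_mul_gridNorm (hh : 0 ≤ h) (a b : Grid → Fin 3 → ℝ) :
    gridInner h s a b ≤ gridNorm h s a * gridNorm h s b := by
  have hcs := Real.sum_mul_le_sqrt_mul_sqrt (s ×ˢ Finset.univ)
    (fun p => a p.1 p.2 * √(h ^ 3)) (fun p => b p.1 p.2 * √(h ^ 3))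
  simp only [Finset.sum_product, mul_pow, Real.sq_sqrt (pow_nonneg hh 3)] at hcs
  simp only [gridInner, gridNorm, Finset.sum_mul]
  convert hcs using 3 with x _ i
  rw [mul_mul_mul_comm, Real.mul_self_sqrt (pow_nonneg hh 3)]

theorem gridInner_dgrad {u : Grid → Fin 3 → ℝ} {φ : Grid → ℝ} (hu : ∀ x ∉ s, u x = 0)
    (hφ : ∀ x ∉ s, φ x = 0) :
    gridInner h s u (dgrad h φ) = -∑ x ∈ s, φ x * ddiv h u x * h ^ 3 := by
  simp only [gridInner, dgrad, Dp, ddiv, Finset.mul_sum, Finset.sum_mul, ← Finset.sum_neg_distrib]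
  rw [Finset.sum_comm, Finset.sum_comm (s := s)]
  refine Finset.sum_congr rfl fun i _ => ?_
  have hparts := Finset.sum_mul_sub_comp_add (a := fun x => u x i) (gE i)
    (fun x hx => by simp [hu x hx]) hφ
  calc ∑ x ∈ s, u x i * ((φ (x + gE i) - φ x) / h) * h ^ 3
      = (∑ x ∈ s, u x i * (φ (x + gE i) - φ x)) * (h ^ 3 / h) := by
        rw [Finset.sum_mul]; exact Finset.sum_congr rfl fun x _ => by ring
    _ = (∑ x ∈ s, (u (x - gE i) i - u x i) * φ x) * (h ^ 3 / h) := by rw [hparts]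
    _ = ∑ x ∈ s, -(φ x * ((u x i - u (x - gE i) i) / h) * h ^ 3) := by
        rw [Finset.sum_mul]; exact Finset.sum_congr rfl fun x _ => by ring

theorem gridInner_skewConv {u w : Grid → Fin 3 → ℝ} (hw : ∀ x ∉ s, w x = 0) :
    gridInner h s w (skewConv h u w) = -∑ x ∈ s, (∑ i, w x i ^ 2) * ddiv h u x * h ^ 3 / 2 := by
  calc gridInner h s w (skewConv h u w)
      = ∑ i, ∑ j, (∑ x ∈ s, w x i * (u (x - gE j) j * (w x i - w (x - gE j) i)
          + u x j * (w (x + gE j) i - w x i))) * (h ^ 3 / (2 * h)) := by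
        simp only [gridInner, skewConv, Dp, sub_add_cancel, Finset.mul_sum, Finset.sum_mul]
        rw [Finset.sum_comm]
        refine Finset.sum_congr rfl fun i _ => ?_
        rw [Finset.sum_comm]
        exact Finset.sum_congr rfl fun j _ => Finset.sum_congr rfl fun x _ => by ring
    _ = ∑ i, ∑ j, (∑ x ∈ s, w x i ^ 2 * (u (x - gE j) j - u x j)) * (h ^ 3 / (2 * h)) := by
        refine Finset.sum_congr rfl fun i _ => Finset.sum_congr rfl fun j _ => ?_
        rw [Finset.sum_mul_skew_diff (a := fun x => u x j) (φ := fun x => w x i) (gE j)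
          fun x hx => congrFun (hw x hx) i]
    _ = _ := by
        simp only [ddiv, Finset.sum_mul, Finset.mul_sum, Finset.sum_div, ← Finset.sum_neg_distrib]
        rw [Finset.sum_comm (s := s), Finset.sum_comm (s := Finset.univ)]
        refine Finset.sum_congr rfl fun j _ => ?_
        rw [Finset.sum_comm]
        exact Finset.sum_congr rfl fun x _ => Finset.sum_congr rfl fun i _ => by ring

theorem gridInner_dlap_nonpos (hh : 0 ≤ h) {w : Grid → Fin 3 → ℝ} (hw : ∀ x ∉ s, w x = 0) :
    gridInner h s w (dlap h w) ≤ 0 := by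
  calc gridInner h s w (dlap h w)
      = ∑ i, ∑ j, (∑ x ∈ s, w x i * (w (x + gE j) i + w (x - gE j) i - 2 * w x i))
          * (h ^ 3 / h ^ 2) := by
        simp only [gridInner, dlap, Dtwo, Finset.mul_sum, Finset.sum_mul]
        rw [Finset.sum_comm]
        refine Finset.sum_congr rfl fun i _ => ?_
        rw [Finset.sum_comm]
        exact Finset.sum_congr rfl fun j _ => Finset.sum_congr rfl fun x _ => by ring
    _ ≤ 0 := Finset.sum_nonpos fun i _ => Finset.sum_nonpos fun j _ =>
        mul_nonpos_of_nonpos_of_nonneg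
          (Finset.sum_mul_second_diff_nonpos (gE j) fun x hx => by simp [hw x hx])
          (by positivity)

end GridFields

section Scheme

variable {h : ℝ} {Ωh : Finset Grid}

theorem sum_mul_ddiv_eq_zero {u : Grid → Fin 3 → ℝ} {g : Grid → ℝ}
    (hdiv : ∀ x ∈ Ωh \ gBdry Ωh, ddiv h u x = 0) (hg : ∀ x ∈ gBdry Ωh, g x = 0) :
    ∑ x ∈ Ωh, g x * ddiv h u x * h ^ 3 = 0 :=
  Finset.sum_eq_zero fun x hx => by
    by_cases hb : x ∈ gBdry Ωh
    · simp [hg x hb]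
    · simp [hdiv x (Finset.mem_sdiff.2 ⟨hx, hb⟩)]

theorem gridNorm_le_of_add_dgrad (hh : 0 ≤ h) {u w : Grid → Fin 3 → ℝ}
    (hu : ∀ x ∉ Ωh, u x = 0) (hub : ∀ x ∈ gBdry Ωh, u x = 0)
    (hdiv : ∀ x ∈ Ωh \ gBdry Ωh, ddiv h u x = 0)
    (hproj : ∃ φ : Grid → ℝ, (∀ x, x ∉ Ωh → φ x = 0) ∧ (∀ x ∈ gBdry Ωh, φ x = 0) ∧
      ∀ x ∈ Ωh \ gBdry Ωh, u x + dgrad h φ x = w x) :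
    gridNorm h Ωh u ≤ gridNorm h Ωh w := by
  obtain ⟨φ, hφ, hφb, hw⟩ := hproj
  have hortho : gridInner h Ωh u (dgrad h φ) = 0 := by
    rw [gridInner_dgrad hu hφ, neg_eq_zero]
    exact sum_mul_ddiv_eq_zero hdiv hφb
  have hpt : ∀ x ∈ Ωh, (∑ i, u x i ^ 2) * h ^ 3 + 2 * ((∑ i, u x i * dgrad h φ x i) * h ^ 3)
      ≤ (∑ i, w x i ^ 2) * h ^ 3 := by
    intro x hx
    by_cases hb : x ∈ gBdry Ωh
    · simp only [hub x hb, Pi.zero_apply, zero_mul, zero_pow two_ne_zero, Finset.sum_const_zero,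
        mul_zero, add_zero]
      positivity
    · rw [← hw x (Finset.mem_sdiff.2 ⟨hx, hb⟩)]
      have hexp : (∑ i, (u x + dgrad h φ x) i ^ 2) * h ^ 3 = (∑ i, u x i ^ 2) * h ^ 3
          + 2 * ((∑ i, u x i * dgrad h φ x i) * h ^ 3) + (∑ i, dgrad h φ x i ^ 2) * h ^ 3 := by
        simp only [Pi.add_apply, add_sq, Finset.sum_add_distrib, ← Finset.mul_sum, mul_assoc]
        ring
      have : 0 ≤ (∑ i, dgrad h φ x i ^ 2) * h ^ 3 := by positivity
      linarith
  have hsum := Finset.sum_le_sum hpt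
  rw [Finset.sum_add_distrib, ← Finset.mul_sum] at hsum
  exact Real.sqrt_le_sqrt (by simp only [gridInner] at hortho; linarith)

theorem gridNorm_le_of_scheme (hh : 0 ≤ h) {τ : ℝ} (hτ : 0 < τ) {u v g : Grid → Fin 3 → ℝ}
    (hdiv : ∀ x ∈ Ωh \ gBdry Ωh, ddiv h u x = 0)
    (hv : ∀ x ∉ Ωh, v x = 0) (hvb : ∀ x ∈ gBdry Ωh, v x = 0)
    (hscheme : ∀ x ∈ Ωh \ gBdry Ωh, ∀ i : Fin 3,
      (v x i - u x i) / τ = -skewConv h u v x i + dlap h v x i + g x i) :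
    gridNorm h Ωh v ≤ gridNorm h Ωh u + τ * gridNorm h Ωh g := by
  have hpt : ∀ x ∈ Ωh, ∑ i, v x i * v x i = ∑ i, v x i * u x i
      - τ * ∑ i, v x i * skewConv h u v x i + τ * ∑ i, v x i * dlap h v x i
      + τ * ∑ i, v x i * g x i := by
    intro x hx
    by_cases hb : x ∈ gBdry Ωh
    · simp [hvb x hb]
    · simp only [Finset.mul_sum, ← Finset.sum_sub_distrib, ← Finset.sum_add_distrib]
      refine Finset.sum_congr rfl fun i _ => ?_
      have hi := hscheme x (Finset.mem_sdiff.2 ⟨hx, hb⟩) i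
      rw [div_eq_iff hτ.ne'] at hi
      linear_combination v x i * hi
  have henergy : gridInner h Ωh v v = gridInner h Ωh v u
      - τ * gridInner h Ωh v (skewConv h u v) + τ * gridInner h Ωh v (dlap h v)
      + τ * gridInner h Ωh v g := by
    simp only [gridInner, Finset.mul_sum, ← Finset.sum_sub_distrib, ← Finset.sum_add_distrib]
    exact Finset.sum_congr rfl fun x hx => by rw [hpt x hx]; ring
  have hconv : gridInner h Ωh v (skewConv h u v) = 0 := by
    rw [gridInner_skewConv hv, neg_eq_zero, ← Finset.sum_div,
      sum_mul_ddiv_eq_zero (g := fun x => ∑ i, v x i ^ 2) hdiv fun x hx => by simp [hvb x hx],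
      zero_div]
  have hlap := gridInner_dlap_nonpos hh hv
  have hvu := gridInner_le_mul_gridNorm (s := Ωh) hh v u
  have hvg := gridInner_le_mul_gridNorm (s := Ωh) hh v g
  have hsq : gridNorm h Ωh v ^ 2 ≤ gridNorm h Ωh v * (gridNorm h Ωh u + τ * gridNorm h Ωh g) := by
    rw [← gridInner_self hh, henergy, hconv]
    nlinarith [mul_le_mul_of_nonneg_left hvg hτ.le, mul_nonpos_of_nonneg_of_nonpos hτ.le hlap]
  have hb : 0 ≤ gridNorm h Ωh u + τ * gridNorm h Ωh g :=
    add_nonneg (Real.sqrt_nonneg _) (mul_nonneg hτ.le (Real.sqrt_nonneg _))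
  by_contra! hlt
  nlinarith [mul_lt_mul_of_pos_left hlt (hb.trans_lt hlt)]

end Scheme

section Averaging

variable {α : Type*} [MeasurableSpace α] {μ : Measure α} {t : Set α}

theorem sq_setAverage_mul_le (h0 : μ t ≠ 0) (ht : μ t ≠ ∞) {g : α → ℝ}
    (hg : IntegrableOn g t μ) (hg2 : IntegrableOn (fun y => g y ^ 2) t μ) :
    ((μ.real t)⁻¹ * ∫ y in t, g y ∂μ) ^ 2 * μ.real t ≤ ∫ y in t, g y ^ 2 ∂μ := by
  have hjensen := (Even.convexOn_pow (𝕜 := ℝ) even_two).map_set_average_le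
    (continuous_pow 2).continuousOn isClosed_univ h0 ht (ae_of_all _ fun _ => mem_univ _) hg hg2
  simp only [setAverage_eq, smul_eq_mul] at hjensen
  have hpos : 0 < μ.real t := ENNReal.toReal_pos h0 ht
  calc ((μ.real t)⁻¹ * ∫ y in t, g y ∂μ) ^ 2 * μ.real t
      ≤ (μ.real t)⁻¹ * (∫ y in t, g y ^ 2 ∂μ) * μ.real t := by gcongr
    _ = ∫ y in t, g y ^ 2 ∂μ := by field_simp

theorem integrableOn_of_integrableOn_sq (ht : μ t ≠ ∞) {g : α → ℝ}
    (hm : AEStronglyMeasurable g (μ.restrict t)) (hg2 : IntegrableOn (fun y => g y ^ 2) t μ) :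
    IntegrableOn g t μ :=
  haveI : IsFiniteMeasure (μ.restrict t) := isFiniteMeasure_restrict.2 ht
  ((memLp_two_iff_integrable_sq hm).2 hg2).integrable one_le_two

theorem integrableOn_sq_of_integrableOn_sum_sq {ι : Type*} [Fintype ι] {g : α → ι → ℝ}
    (hm : ∀ i, AEStronglyMeasurable (fun y => g y i) (μ.restrict t))
    (hg : IntegrableOn (fun y => ∑ i, g y i ^ 2) t μ) (i : ι) :
    IntegrableOn (fun y => g y i ^ 2) t μ :=
  hg.mono' ((hm i).pow 2) <| ae_of_all _ fun y => by
    rw [Real.norm_of_nonneg (sq_nonneg _)]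
    exact Finset.single_le_sum (f := fun i => g y i ^ 2) (fun i _ => sq_nonneg _)
      (Finset.mem_univ i)

theorem sum_sq_setAverage_mul_le {ι : Type*} [Fintype ι] {c : ℝ} (hc : 0 < c)
    (ht : μ t = ENNReal.ofReal c) {g : α → ι → ℝ}
    (hm : ∀ i, AEStronglyMeasurable (fun y => g y i) (μ.restrict t))
    (hg : IntegrableOn (fun y => ∑ i, g y i ^ 2) t μ) :
    (∑ i, (c⁻¹ * ∫ y in t, g y i ∂μ) ^ 2) * c ≤ ∫ y in t, ∑ i, g y i ^ 2 ∂μ := by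
  have hμ : μ.real t = c := by rw [measureReal_def, ht, ENNReal.toReal_ofReal hc.le]
  have h0 : μ t ≠ 0 := by rw [ht]; exact (ENNReal.ofReal_pos.2 hc).ne'
  have htop : μ t ≠ ∞ := by rw [ht]; exact ENNReal.ofReal_ne_top
  have hg2 := integrableOn_sq_of_integrableOn_sum_sq hm hg
  rw [integral_finsetSum _ fun i _ => hg2 i, Finset.sum_mul, ← hμ]
  exact Finset.sum_le_sum fun i _ =>
    sq_setAverage_mul_le h0 htop (integrableOn_of_integrableOn_sq htop (hm i) (hg2 i)) (hg2 i)

theorem sum_setIntegral_le_setIntegral {ι : Type*} (s : Finset ι) {Q : ι → Set α} {S : Set α}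
    (hQm : ∀ p ∈ s, MeasurableSet (Q p)) (hdisj : Pairwise (Disjoint on Q))
    (hQS : ∀ p ∈ s, Q p ⊆ S) {F : α → ℝ} (hF0 : ∀ y, 0 ≤ F y) (hF : IntegrableOn F S μ) :
    ∑ p ∈ s, ∫ y in Q p, F y ∂μ ≤ ∫ y in S, F y ∂μ := by
  rw [← integral_biUnion_finset s hQm (hdisj.set_pairwise _) fun p hp => hF.mono_set (hQS p hp)]
  exact setIntegral_mono_set hF (ae_of_all _ fun y => hF0 y) (Set.iUnion₂_subset hQS).eventuallyLE

end Averaging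

section Cubes

variable {h : ℝ}

theorem cube_eq_pi (h : ℝ) (x : Grid) :
    Cube h x = Set.univ.pi fun i => Set.Ico (h * x i - h / 2) (h * x i + h / 2) := by
  ext y
  simp [Cube, Set.mem_pi]

theorem measurableSet_cube (h : ℝ) (x : Grid) : MeasurableSet (Cube h x) := by
  rw [cube_eq_pi]
  exact MeasurableSet.univ_pi fun _ => measurableSet_Ico

theorem volume_cube (hh : 0 ≤ h) (x : Grid) : volume (Cube h x) = ENNReal.ofReal (h ^ 3) := by
  simp [cube_eq_pi, volume_pi_pi, Real.volume_Ico, ENNReal.ofReal_pow hh]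

theorem pairwise_disjoint_cube (hh : 0 ≤ h) : Pairwise (Disjoint on Cube h) := by
  intro x y hxy
  obtain ⟨i, hi⟩ := Function.ne_iff.1 hxy
  have hmono : Monotone fun n : ℤ => h * n - h / 2 := fun a b hab => by
    simp only; gcongr
  have hend : ∀ n : ℤ, h * ((n : ℝ) + 1) - h / 2 = h * n + h / 2 := fun n => by ring
  have := hmono.pairwise_disjoint_on_Ico_succ hi
  simp only [Function.onFun, Order.succ_eq_add_one, Int.cast_add, Int.cast_one, hend] at this
  rw [Function.onFun, cube_eq_pi, cube_eq_pi, Set.disjoint_univ_pi]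
  exact ⟨i, this⟩

theorem pairwise_disjoint_Ico_mul_natCast {τ : ℝ} (hτ : 0 ≤ τ) :
    Pairwise (Disjoint on fun n : ℕ => Set.Ico (τ * n) (τ * (n + 1))) := by
  have hmono : Monotone fun n : ℕ => τ * n := fun a b hab => by
    simp only; gcongr
  simpa only [Order.succ_eq_add_one, Nat.cast_add, Nat.cast_one] using
    hmono.pairwise_disjoint_on_Ico_succ

def spaceTimeCell (τ h : ℝ) (p : ℕ × Grid) : Set (ℝ × (Fin 3 → ℝ)) :=
  Set.Ico (τ * p.1) (τ * (p.1 + 1)) ×ˢ Cube h p.2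

theorem measurableSet_spaceTimeCell (τ h : ℝ) (p : ℕ × Grid) :
    MeasurableSet (spaceTimeCell τ h p) :=
  measurableSet_Ico.prod (measurableSet_cube h p.2)

theorem volume_spaceTimeCell {τ : ℝ} (hτ : 0 ≤ τ) (hh : 0 ≤ h) (p : ℕ × Grid) :
    volume (spaceTimeCell τ h p) = ENNReal.ofReal (τ * h ^ 3) := by
  rw [spaceTimeCell, Measure.volume_eq_prod, Measure.prod_prod, Real.volume_Ico,
    volume_cube hh, show τ * (p.1 + 1) - τ * p.1 = τ by ring, ← ENNReal.ofReal_mul hτ]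

theorem spaceTimeCell_subset {τ T : ℝ} (hτ : 0 ≤ τ) {m N : ℕ} (hm : m < N) (hN : τ * N ≤ T)
    (x : Grid) : spaceTimeCell τ h (m, x) ⊆ Set.Icc 0 T ×ˢ Cube h x := by
  have hm' : (m : ℝ) + 1 ≤ N := by exact_mod_cast hm
  refine Set.prod_mono (Set.Ico_subset_Icc_self.trans (Set.Icc_subset_Icc (by positivity) ?_))
    subset_rfl
  exact (mul_le_mul_of_nonneg_left hm' hτ).trans hN

theorem pairwise_disjoint_spaceTimeCell {τ : ℝ} (hτ : 0 ≤ τ) (hh : 0 ≤ h) :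
    Pairwise (Disjoint on spaceTimeCell τ h) := by
  rintro ⟨m, x⟩ ⟨m', x'⟩ hne
  rw [onFun, spaceTimeCell, spaceTimeCell, Set.disjoint_prod]
  by_cases hm : m = m'
  · subst hm
    exact Or.inr (pairwise_disjoint_cube hh fun hx => hne (Prod.ext rfl hx))
  · exact Or.inl (pairwise_disjoint_Ico_mul_natCast hτ hm)

end Cubes

section CellAverages

variable {h : ℝ} {Ω : Set (Fin 3 → ℝ)} {Ωh : Finset Grid}

theorem gridNorm_cellAverage_le (hh : 0 < h) (hcube : ∀ x ∈ Ωh, Cube h x ⊆ Ω)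
    {v0 : (Fin 3 → ℝ) → Fin 3 → ℝ} (hv0m : ∀ i, Measurable fun y => v0 y i)
    (hv0L2 : IntegrableOn (fun y => ∑ i, v0 y i ^ 2) Ω) {ut0 : Grid → Fin 3 → ℝ}
    (hut0 : ∀ x i, ut0 x i =
      if x ∈ Ωh \ gBdry Ωh then (h ^ 3)⁻¹ * ∫ y in Cube h x, v0 y i else 0) :
    gridNorm h Ωh ut0 ≤ √(∫ y in Ω, ∑ i, v0 y i ^ 2) := by
  have hI : Ωh \ gBdry Ωh ⊆ Ωh := Finset.sdiff_subset
  refine Real.sqrt_le_sqrt ?_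
  calc ∑ x ∈ Ωh, (∑ i, ut0 x i ^ 2) * h ^ 3
      = ∑ x ∈ Ωh \ gBdry Ωh, (∑ i, ((h ^ 3)⁻¹ * ∫ y in Cube h x, v0 y i) ^ 2) * h ^ 3 := by
        rw [← Finset.sum_subset hI fun x _ hx => by simp [hut0, hx]]
        exact Finset.sum_congr rfl fun x hx => by simp [hut0, hx]
    _ ≤ ∑ x ∈ Ωh \ gBdry Ωh, ∫ y in Cube h x, ∑ i, v0 y i ^ 2 :=
        Finset.sum_le_sum fun x hx => sum_sq_setAverage_mul_le (by positivity) (volume_cube hh.le x)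
          (fun i => (hv0m i).aestronglyMeasurable) (hv0L2.mono_set (hcube x (hI hx)))
    _ ≤ ∫ y in Ω, ∑ i, v0 y i ^ 2 :=
        sum_setIntegral_le_setIntegral _ (fun x _ => measurableSet_cube h x)
          (pairwise_disjoint_cube hh.le) (fun x hx => hcube x (hI hx)) (fun y => by positivity)
          hv0L2

theorem sum_mul_gridNorm_sq_le (hh : 0 < h) {τ T : ℝ} (hτ : 0 < τ) {N : ℕ} (hN : τ * N ≤ T)
    (hcube : ∀ x ∈ Ωh, Cube h x ⊆ Ω) {f : ℝ → (Fin 3 → ℝ) → Fin 3 → ℝ}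
    (hfm : ∀ i, Measurable fun p : ℝ × (Fin 3 → ℝ) => f p.1 p.2 i)
    (hfL2 : IntegrableOn (fun p : ℝ × (Fin 3 → ℝ) => ∑ i, f p.1 p.2 i ^ 2) (Set.Icc 0 T ×ˢ Ω))
    {fd : ℕ → Grid → Fin 3 → ℝ}
    (hfd : ∀ (n : ℕ) x i, fd n x i =
      if x ∈ Ωh then
        (τ * h ^ 3)⁻¹ *
          ∫ t in Set.Ico (τ * (n : ℝ)) (τ * ((n : ℝ) + 1)), ∫ y in Cube h x, f t y i
      else 0) :
    ∑ m ∈ Finset.range N, τ * gridNorm h Ωh (fd m) ^ 2 ≤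
      ∫ t in Set.Icc 0 T, ∫ y in Ω, ∑ i, f t y i ^ 2 := by
  have hQS : ∀ p ∈ Finset.range N ×ˢ Ωh, spaceTimeCell τ h p ⊆ Set.Icc 0 T ×ˢ Ω := by
    rintro ⟨m, x⟩ hp
    obtain ⟨hm, hx⟩ := Finset.mem_product.1 hp
    exact (spaceTimeCell_subset hτ.le (Finset.mem_range.1 hm) hN x).trans
      (Set.prod_mono subset_rfl (hcube x hx))
  have hvol := volume_spaceTimeCell hτ.le hh.le
  have hfQ : ∀ p ∈ Finset.range N ×ˢ Ωh,
      IntegrableOn (fun q : ℝ × (Fin 3 → ℝ) => ∑ i, f q.1 q.2 i ^ 2) (spaceTimeCell τ h p) :=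
    fun p hp => hfL2.mono_set (hQS p hp)
  have hfdQ : ∀ m ∈ Finset.range N, ∀ x ∈ Ωh, ∀ i,
      fd m x i = (τ * h ^ 3)⁻¹ * ∫ q in spaceTimeCell τ h (m, x), f q.1 q.2 i := by
    intro m hm x hx i
    have hint := integrableOn_of_integrableOn_sq (by rw [hvol]; exact ENNReal.ofReal_ne_top)
      (hfm i).aestronglyMeasurable (integrableOn_sq_of_integrableOn_sum_sq
        (fun i => (hfm i).aestronglyMeasurable) (hfQ (m, x) (Finset.mem_product.2 ⟨hm, hx⟩)) i)
    rw [hfd, if_pos hx, spaceTimeCell, Measure.volume_eq_prod,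
      setIntegral_prod _ (by rwa [← Measure.volume_eq_prod])]
  calc ∑ m ∈ Finset.range N, τ * gridNorm h Ωh (fd m) ^ 2
      = ∑ p ∈ Finset.range N ×ˢ Ωh,
          (∑ i, ((τ * h ^ 3)⁻¹ * ∫ q in spaceTimeCell τ h p, f q.1 q.2 i) ^ 2) * (τ * h ^ 3) := by
        rw [Finset.sum_product]
        refine Finset.sum_congr rfl fun m hm => ?_
        rw [gridNorm, Real.sq_sqrt (Finset.sum_nonneg fun x _ => by positivity), Finset.mul_sum]
        exact Finset.sum_congr rfl fun x hx => by simp only [hfdQ m hm x hx]; ring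
    _ ≤ ∑ p ∈ Finset.range N ×ˢ Ωh, ∫ q in spaceTimeCell τ h p, ∑ i, f q.1 q.2 i ^ 2 :=
        Finset.sum_le_sum fun p hp => sum_sq_setAverage_mul_le (by positivity) (hvol p)
          (fun i => (hfm i).aestronglyMeasurable) (hfQ p hp)
    _ ≤ ∫ q in Set.Icc 0 T ×ˢ Ω, ∑ i, f q.1 q.2 i ^ 2 :=
        sum_setIntegral_le_setIntegral _ (fun p _ => measurableSet_spaceTimeCell τ h p)
          (pairwise_disjoint_spaceTimeCell hτ.le hh.le) hQS (fun q => by positivity) hfL2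
    _ = ∫ t in Set.Icc 0 T, ∫ y in Ω, ∑ i, f t y i ^ 2 := by
        rw [Measure.volume_eq_prod]
        exact setIntegral_prod _ (by rwa [← Measure.volume_eq_prod])

end CellAverages

theorem scheme_stability_general
    (h τ T : ℝ) (hh : 0 < h) (hτ : 0 < τ)
    (Tτ : ℕ) (hTτ : τ * Tτ ≤ T ∧ T < τ * Tτ + τ)
    (Ω : Set (Fin 3 → ℝ)) (Ωh : Finset (Fin 3 → ℤ))
    (hcube : ∀ x ∈ Ωh, Cube h x ⊆ Ω)
    (v0 : (Fin 3 → ℝ) → Fin 3 → ℝ) (f : ℝ → (Fin 3 → ℝ) → Fin 3 → ℝ)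
    (hv0m : ∀ i, Measurable fun y => v0 y i)
    (hv0L2 : IntegrableOn (fun y => ∑ i, (v0 y i) ^ 2) Ω)
    (hfm : ∀ i, Measurable fun p : ℝ × (Fin 3 → ℝ) => f p.1 p.2 i)
    (hfL2 : IntegrableOn (fun p : ℝ × (Fin 3 → ℝ) => ∑ i, (f p.1 p.2 i) ^ 2)
      (Set.Icc 0 T ×ˢ Ω))
    (ut0 : (Fin 3 → ℤ) → Fin 3 → ℝ)
    (hut0 : ∀ x i, ut0 x i =
      if x ∈ Ωh \ gBdry Ωh then (h ^ 3)⁻¹ * ∫ y in Cube h x, v0 y i else 0)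
    (fd : ℕ → (Fin 3 → ℤ) → Fin 3 → ℝ)
    (hfd : ∀ (n : ℕ) x i, fd n x i =
      if x ∈ Ωh then
        (τ * h ^ 3)⁻¹ *
          ∫ t in Set.Ico (τ * (n : ℝ)) (τ * ((n : ℝ) + 1)), ∫ y in Cube h x, f t y i
      else 0)
    (u v : ℕ → (Fin 3 → ℤ) → Fin 3 → ℝ)
    (hu0 : ∀ n, ∀ x, x ∉ Ωh → u n x = 0) (hub : ∀ n, ∀ x ∈ gBdry Ωh, u n x = 0)
    (hdivu : ∀ n, ∀ x ∈ Ωh \ gBdry Ωh, ddiv h (u n) x = 0)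
    (hproj0 : ∃ φ : (Fin 3 → ℤ) → ℝ, (∀ x, x ∉ Ωh → φ x = 0) ∧
      (∀ x ∈ gBdry Ωh, φ x = 0) ∧
      ∀ x ∈ Ωh \ gBdry Ωh, u 0 x + dgrad h φ x = ut0 x)
    (hv0' : ∀ n, ∀ x, x ∉ Ωh → v n x = 0) (hvb : ∀ n, ∀ x ∈ gBdry Ωh, v n x = 0)
    (hscheme : ∀ n, ∀ x ∈ Ωh \ gBdry Ωh, ∀ i : Fin 3,
      (v n x i - u n x i) / τ =
        -(∑ j, (u n (x - gE j) j * Dp h j (fun y => v n y i) (x - gE j)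
            + u n x j * Dp h j (fun y => v n y i) x) / 2)
        + (∑ j, Dtwo h j (fun y => v n y i) x) + fd n x i)
    (hproj : ∀ n, ∃ φ : (Fin 3 → ℤ) → ℝ, (∀ x, x ∉ Ωh → φ x = 0) ∧
      (∀ x ∈ gBdry Ωh, φ x = 0) ∧
      ∀ x ∈ Ωh \ gBdry Ωh, u (n + 1) x + dgrad h φ x = v n x) :
    ∀ n < Tτ,
      Real.sqrt (∑ x ∈ Ωh, (∑ i, (u (n + 1) x i) ^ 2) * h ^ 3) ≤
        Real.sqrt (∫ y in Ω, ∑ i, (v0 y i) ^ 2) +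
          Real.sqrt T * Real.sqrt (∫ t in Set.Icc (0 : ℝ) T, ∫ y in Ω, ∑ i, (f t y i) ^ 2) := by
  intro n hn
  have hstep : ∀ m, gridNorm h Ωh (u (m + 1)) ≤ gridNorm h Ωh (u m) + τ * gridNorm h Ωh (fd m) :=
    fun m => (gridNorm_le_of_add_dgrad hh.le (hu0 (m + 1)) (hub (m + 1)) (hdivu (m + 1))
      (hproj m)).trans (gridNorm_le_of_scheme hh.le hτ (hdivu m) (hv0' m) (hvb m) (hscheme m))
  have hinit : gridNorm h Ωh (u 0) ≤ √(∫ y in Ω, ∑ i, v0 y i ^ 2) :=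
    (gridNorm_le_of_add_dgrad hh.le (hu0 0) (hub 0) (hdivu 0) hproj0).trans
      (gridNorm_cellAverage_le hh hcube hv0m hv0L2 hut0)
  have hNT : τ * ((n + 1 : ℕ) : ℝ) ≤ T :=
    (mul_le_mul_of_nonneg_left (by exact_mod_cast hn) hτ.le).trans hTτ.1
  have hforcing := sum_mul_gridNorm_sq_le hh hτ hNT hcube hfm hfL2 hfd
  have htelescope : gridNorm h Ωh (u (n + 1)) - gridNorm h Ωh (u 0) ≤
      ∑ k ∈ Finset.range (n + 1), τ * gridNorm h Ωh (fd k) := by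
    rw [← Finset.sum_range_sub (fun k => gridNorm h Ωh (u k))]
    exact Finset.sum_le_sum fun k _ => by linarith [hstep k]
  have hcs := Finset.sum_mul_le_sqrt_mul_card_mul_sqrt (Finset.range (n + 1)) hτ.le
    fun k => gridNorm h Ωh (fd k)
  rw [Finset.card_range] at hcs
  have hdata := mul_le_mul (Real.sqrt_le_sqrt hNT) (Real.sqrt_le_sqrt hforcing)
    (Real.sqrt_nonneg _) (Real.sqrt_nonneg _)
  show gridNorm h Ωh (u (n + 1)) ≤ _
  linarith

/-- Theorem 4.1, estimate (4.2): stability of the full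
scheme, uniformly in `h` and `τ`: `‖u^{n+1}‖_{Ω_h} ≤ ‖v⁰‖_{L²} + √T ‖f‖_{L²L²}`. -/
theorem scheme_stability
    (h τ T : ℝ) (hh : 0 < h) (hτ : 0 < τ) (hT : 0 < T)
    (Tτ : ℕ) (hTτ : τ * Tτ ≤ T ∧ T < τ * Tτ + τ)
    (Ω : Set (Fin 3 → ℝ)) (Ωh : Finset (Fin 3 → ℤ))
    (hcube : ∀ x ∈ Ωh, Cube h x ⊆ Ω)
    (v0 : (Fin 3 → ℝ) → Fin 3 → ℝ) (f : ℝ → (Fin 3 → ℝ) → Fin 3 → ℝ)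
    (hv0m : ∀ i, Measurable fun y => v0 y i)
    (hv0L2 : IntegrableOn (fun y => ∑ i, (v0 y i) ^ 2) Ω)
    (hfm : ∀ i, Measurable fun p : ℝ × (Fin 3 → ℝ) => f p.1 p.2 i)
    (hfL2 : IntegrableOn (fun p : ℝ × (Fin 3 → ℝ) => ∑ i, (f p.1 p.2 i) ^ 2)
      (Set.Icc 0 T ×ˢ Ω))
    (ut0 : (Fin 3 → ℤ) → Fin 3 → ℝ)
    (hut0 : ∀ x i, ut0 x i =
      if x ∈ Ωh \ gBdry Ωh then (h ^ 3)⁻¹ * ∫ y in Cube h x, v0 y i else 0)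
    (fd : ℕ → (Fin 3 → ℤ) → Fin 3 → ℝ)
    (hfd : ∀ (n : ℕ) x i, fd n x i =
      if x ∈ Ωh then
        (τ * h ^ 3)⁻¹ *
          ∫ t in Set.Ico (τ * (n : ℝ)) (τ * ((n : ℝ) + 1)), ∫ y in Cube h x, f t y i
      else 0)
    (u v : ℕ → (Fin 3 → ℤ) → Fin 3 → ℝ)
    (hu0 : ∀ n, ∀ x, x ∉ Ωh → u n x = 0) (hub : ∀ n, ∀ x ∈ gBdry Ωh, u n x = 0)
    (hdivu : ∀ n, ∀ x ∈ Ωh \ gBdry Ωh, ddiv h (u n) x = 0)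
    (hproj0 : ∃ φ : (Fin 3 → ℤ) → ℝ, (∀ x, x ∉ Ωh → φ x = 0) ∧
      (∀ x ∈ gBdry Ωh, φ x = 0) ∧
      ∀ x ∈ Ωh \ gBdry Ωh, u 0 x + dgrad h φ x = ut0 x)
    (hv0' : ∀ n, ∀ x, x ∉ Ωh → v n x = 0) (hvb : ∀ n, ∀ x ∈ gBdry Ωh, v n x = 0)
    (hscheme : ∀ n, ∀ x ∈ Ωh \ gBdry Ωh, ∀ i : Fin 3,
      (v n x i - u n x i) / τ =
        -(∑ j, (u n (x - gE j) j * Dp h j (fun y => v n y i) (x - gE j)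
            + u n x j * Dp h j (fun y => v n y i) x) / 2)
        + (∑ j, Dtwo h j (fun y => v n y i) x) + fd n x i)
    (hproj : ∀ n, ∃ φ : (Fin 3 → ℤ) → ℝ, (∀ x, x ∉ Ωh → φ x = 0) ∧
      (∀ x ∈ gBdry Ωh, φ x = 0) ∧
      ∀ x ∈ Ωh \ gBdry Ωh, u (n + 1) x + dgrad h φ x = v n x) :
    ∀ n < Tτ,
      Real.sqrt (∑ x ∈ Ωh, (∑ i, (u (n + 1) x i) ^ 2) * h ^ 3) ≤
        Real.sqrt (∫ y in Ω, ∑ i, (v0 y i) ^ 2) +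
          Real.sqrt T * Real.sqrt (∫ t in Set.Icc (0 : ℝ) T, ∫ y in Ω, ∑ i, (f t y i) ^ 2) :=
  scheme_stability_general h τ T hh hτ Tτ hTτ Ω Ωh hcube v0 f hv0m hv0L2 hfm hfL2 ut0 hut0 fd hfd u
    v hu0 hub hdivu hproj0 hv0' hvb hscheme hproj
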